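/- Let 1 ≤ d ≤ 5 and let A, B ∈ M_d(ℂ) be a simple representation of B_3 such that A is diagonalizable with pairwise distinct eigenvalues λ_1, …, λ_d and the representation is unitarizable (there exists an invertible matrix M with M·A·M⁻¹ and M·B·M⁻¹ unitary). Then every scalar μ_{1i} for 2 ≤ i ≤ d is a strictly positive real number. -/

import Mathlib

open Matrix Polynomial

/-- The eigenprojection `e_{M,i} = ∏_{j ≠ i} (M - λ_j·I)/(λ_i - λ_j)` of a matrix `M`
onto the `λ_i`-eigenspace. -/
noncomputable def eigProj {d : ℕ} (lam : Fin d → ℂ)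
    (M : Matrix (Fin d) (Fin d) ℂ) (i : Fin d) : Matrix (Fin d) (Fin d) ℂ :=
  (∏ j ∈ Finset.univ.erase i, (lam i - lam j)⁻¹) •
    Polynomial.aeval M (∏ j ∈ Finset.univ.erase i, (X - C (lam j)))

section Aux
variable {d : ℕ}

abbrev Mat (d : ℕ) := Matrix (Fin d) (Fin d) ℂ

/-- conjugation algebra hom -/
noncomputable def conjAlgHom (U V : Mat d) (hUV : U * V = 1) : Mat d →ₐ[ℂ] Mat d where
  toFun X := U * X * V
  map_one' := by show U * 1 * V = 1; rw [mul_one, hUV]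
  map_mul' X Y := by
    show U * (X * Y) * V = U * X * V * (U * Y * V)
    have hVU : V * U = 1 := mul_eq_one_comm.mp hUV
    calc U * (X * Y) * V = U * (X * ((V * U) * Y)) * V := by rw [hVU, one_mul]
    _ = U * X * V * (U * Y * V) := by noncomm_ring
  map_zero' := by show U * 0 * V = 0; simp
  map_add' X Y := by show U * (X + Y) * V = U * X * V + U * Y * V; noncomm_ring
  commutes' r := by
    show U * algebraMap ℂ (Mat d) r * V = algebraMap ℂ (Mat d) r
    simp only [Algebra.algebraMap_eq_smul_one]
    rw [mul_smul_comm, mul_one, smul_mul_assoc, hUV]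

lemma conjAlgHom_apply (U V : Mat d) (hUV : U * V = 1) (X : Mat d) :
    conjAlgHom U V hUV X = U * X * V := rfl

lemma aeval_conj (U V X : Mat d) (hUV : U * V = 1) (p : ℂ[X]) :
    aeval (U * X * V) p = U * aeval X p * V := by
  have := Polynomial.aeval_algHom_apply (conjAlgHom U V hUV) X p
  simpa [conjAlgHom_apply] using this

lemma eigProj_conj (lam : Fin d → ℂ) (U V X : Mat d) (hUV : U * V = 1) (i : Fin d) :
    eigProj lam (U * X * V) i = U * eigProj lam X i * V := by
  unfold eigProj
  rw [aeval_conj _ _ _ hUV, mul_smul_comm, smul_mul_assoc]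

lemma aeval_diagonal (v : Fin d → ℂ) (p : ℂ[X]) :
    aeval (diagonal v) p = diagonal (fun k => p.eval (v k)) := by
  induction p using Polynomial.induction_on' with
  | add p q hp hq =>
      rw [map_add, hp, hq, diagonal_add]
      congr 1
      funext k
      simp
  | monomial n a =>
      rw [aeval_monomial, Matrix.algebraMap_eq_diagonal, diagonal_pow, diagonal_mul_diagonal]
      congr 1
      funext k
      simp [eval_monomial]

/-- the diagonal 0/1 projection -/
noncomputable def eProj (i : Fin d) : Mat d := diagonal (fun k => if k = i then 1 else 0)

lemma eigProj_diagonal (v : Fin d → ℂ) (hv : Function.Injective v) (i : Fin d) :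
    eigProj v (diagonal v) i = eProj i := by
  unfold eigProj eProj
  rw [aeval_diagonal]
  ext k l
  rcases eq_or_ne k l with rfl | hkl
  swap
  · simp [diagonal_apply_ne _ hkl]
  simp only [Matrix.smul_apply, diagonal_apply_eq, smul_eq_mul, eval_prod, eval_sub, eval_X,
    eval_C]
  by_cases hk : k = i
  · subst hk
    rw [← Finset.prod_mul_distrib]
    rw [if_pos rfl]
    apply Finset.prod_eq_one
    intro j hj
    have : v k - v j ≠ 0 := by
      rw [sub_ne_zero]
      exact fun h => (Finset.mem_erase.mp hj).1 (hv h).symm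
    field_simp
  · rw [if_neg hk]
    apply mul_eq_zero_of_right
    exact Finset.prod_eq_zero (Finset.mem_erase.mpr ⟨hk, Finset.mem_univ k⟩) (sub_self _)

lemma eigProj_of_conj_diagonal (v : Fin d → ℂ) (hv : Function.Injective v)
    (U V : Mat d) (hUV : U * V = 1) (hVU : V * U = 1) (i : Fin d) :
    eigProj v (U * diagonal v * V) i = U * eProj i * V := by
  rw [eigProj_conj v U V _ hUV, eigProj_diagonal v hv]

end Aux

section Aux2
variable {d : ℕ}

lemma star_aeval (X : Mat d) (p : ℂ[X]) :
    (aeval X p)ᴴ = aeval Xᴴ (p.map (starRingEnd ℂ)) := by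
  induction p using Polynomial.induction_on' with
  | add p q hp hq => rw [map_add, conjTranspose_add, hp, hq, Polynomial.map_add, map_add]
  | monomial n a =>
      rw [aeval_monomial, Polynomial.map_monomial, aeval_monomial]
      rw [conjTranspose_mul, conjTranspose_pow]
      have : (algebraMap ℂ (Mat d) a)ᴴ = algebraMap ℂ (Mat d) (starRingEnd ℂ a) := by
        rw [Algebra.algebraMap_eq_smul_one, Algebra.algebraMap_eq_smul_one,
          conjTranspose_smul, conjTranspose_one]
        rfl
      rw [this]
      exact (Algebra.commutes (starRingEnd ℂ a) (Xᴴ ^ n)).symm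

lemma star_eigProj (lam : Fin d → ℂ) (X : Mat d) (i : Fin d) :
    (eigProj lam X i)ᴴ = eigProj (fun k => starRingEnd ℂ (lam k)) Xᴴ i := by
  unfold eigProj
  rw [conjTranspose_smul, star_aeval]
  congr 1
  · show starRingEnd ℂ (∏ j ∈ Finset.univ.erase i, (lam i - lam j)⁻¹) = _
    rw [map_prod]
    exact Finset.prod_congr rfl fun j _ => by rw [map_inv₀, map_sub]
  · rw [Polynomial.map_prod]
    congr 1
    exact Finset.prod_congr rfl fun j _ => by rw [Polynomial.map_sub, Polynomial.map_X,
      Polynomial.map_C]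

lemma eProj_mul_eProj (i : Fin d) : eProj i * eProj (d := d) i = eProj i := by
  unfold eProj
  rw [diagonal_mul_diagonal]
  ext a b
  by_cases h : a = i <;> simp [diagonal_apply, h]

lemma eProj_ne_zero (i : Fin d) : eProj (d := d) i ≠ 0 := by
  intro h
  have := congrFun (congrFun h i) i
  simp [eProj, diagonal_apply_eq] at this

lemma eProj_sandwich (i : Fin d) (X : Mat d) :
    eProj i * X * eProj i = X i i • eProj i := by
  ext a b
  unfold eProj
  rw [Matrix.mul_diagonal, Matrix.diagonal_mul, Matrix.smul_apply]
  by_cases hab : a = b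
  · subst hab
    by_cases ha : a = i
    · subst ha; simp
    · simp [diagonal_apply, ha]
  · rw [diagonal_apply_ne _ hab]
    by_cases ha : a = i
    · have hb : ¬ b = i := fun h => hab (ha.trans h.symm)
      simp [hb]
    · simp [ha]

end Aux2

section Aux3
variable {d : ℕ}

lemma elim_aux (la lb lc ta tb tc : ℂ) (hab : la ≠ lb) (hac : la ≠ lc)
    (ha : la ≠ 0) (hb : lb ≠ 0) (hc : lc ≠ 0)
    (e0 : ta + tb + tc = 0) (e1 : la * ta + lb * tb + lc * tc = 0)
    (e2 : la⁻¹ * ta + lb⁻¹ * tb + lc⁻¹ * tc = 0) : ta = 0 := by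
  have e2' : lb * lc * ta + la * lc * tb + la * lb * tc = 0 := by
    have h := congrArg (fun z => la * lb * lc * z) e2
    simp only [mul_zero] at h
    rw [← h]
    field_simp
  have key : (la - lb) * (la - lc) * ta = 0 := by
    linear_combination (-(la * (lb + lc))) * e0 + la * e1 + e2'
  rcases mul_eq_zero.mp key with h | h
  · rcases mul_eq_zero.mp h with h' | h'
    · exact absurd (sub_eq_zero.mp h') hab
    · exact absurd (sub_eq_zero.mp h') hac
  · exact h

lemma elim_two (la lb ta tb : ℂ) (hab : la ≠ lb)
    (e0 : ta + tb = 0) (e1 : la * ta + lb * tb = 0) : ta = 0 := by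
  have key : (la - lb) * ta = 0 := by linear_combination e1 - lb * e0
  rcases mul_eq_zero.mp key with h | h
  · exact absurd (sub_eq_zero.mp h) hab
  · exact h

lemma elim3 (s : Finset (Fin d)) (hs : s.card ≤ 3) (lv t : Fin d → ℂ)
    (hinj : Function.Injective lv) (hnz : ∀ a, lv a ≠ 0)
    (h0 : ∑ k ∈ s, t k = 0) (h1 : ∑ k ∈ s, lv k * t k = 0)
    (h2 : ∑ k ∈ s, (lv k)⁻¹ * t k = 0) :
    ∀ k ∈ s, t k = 0 := by
  have hne : ∀ a b : Fin d, a ≠ b → lv a ≠ lv b := fun a b hab h => hab (hinj h)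
  obtain h | h | h | h : s.card = 0 ∨ s.card = 1 ∨ s.card = 2 ∨ s.card = 3 := by omega
  · rw [Finset.card_eq_zero] at h
    subst h
    intro k hk
    exact absurd hk (Finset.notMem_empty k)
  · obtain ⟨a, rfl⟩ := Finset.card_eq_one.mp h
    rw [Finset.sum_singleton] at h0
    intro k hk
    rw [Finset.mem_singleton] at hk
    rw [hk]; exact h0
  · obtain ⟨a, b, hab, rfl⟩ := Finset.card_eq_two.mp h
    rw [Finset.sum_insert (by simp [hab]), Finset.sum_singleton] at h0 h1
    intro k hk
    rcases Finset.mem_insert.mp hk with rfl | hk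
    · exact elim_two (lv k) (lv b) (t k) (t b) (hne _ _ hab) h0 h1
    · rw [Finset.mem_singleton] at hk
      subst hk
      have := elim_two (lv k) (lv a) (t k) (t a) (hne _ _ (Ne.symm hab))
        (by linear_combination h0) (by linear_combination h1)
      exact this
  · obtain ⟨a, b, c, hab, hac, hbc, rfl⟩ := Finset.card_eq_three.mp h
    rw [Finset.sum_insert (by simp [hab, hac]), Finset.sum_insert (by simp [hbc]),
      Finset.sum_singleton] at h0 h1 h2
    intro k hk
    rcases Finset.mem_insert.mp hk with rfl | hk
    · exact elim_aux (lv k) (lv b) (lv c) (t k) (t b) (t c) (hne _ _ hab) (hne _ _ hac)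
        (hnz _) (hnz _) (hnz _) (by linear_combination h0) (by linear_combination h1)
        (by linear_combination h2)
    rcases Finset.mem_insert.mp hk with rfl | hk
    · exact elim_aux (lv k) (lv a) (lv c) (t k) (t a) (t c) (hne _ _ hab.symm) (hne _ _ hbc)
        (hnz _) (hnz _) (hnz _) (by linear_combination h0) (by linear_combination h1)
        (by linear_combination h2)
    · rw [Finset.mem_singleton] at hk
      subst hk
      exact elim_aux (lv k) (lv a) (lv b) (t k) (t a) (t b) (hne _ _ hac.symm) (hne _ _ hbc.symm)
        (hnz _) (hnz _) (hnz _) (by linear_combination h0) (by linear_combination h1)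
        (by linear_combination h2)

/-- block coordinate subalgebra obstruction -/
lemma block_obstruction (A B : Mat d)
    (hsimple : Algebra.adjoin ℂ ({A, B} : Set (Mat d)) = ⊤)
    (J : Set (Fin d))
    (hAJ : ∀ a ∈ J, ∀ b ∉ J, A a b = 0) (hBJ : ∀ a ∈ J, ∀ b ∉ J, B a b = 0)
    (j : Fin d) (hj : j ∈ J) (k : Fin d) (hk : k ∉ J) : False := by
  classical
  let S : Subalgebra ℂ (Mat d) :=
    { carrier := {X : Mat d | ∀ a ∈ J, ∀ b ∉ J, X a b = 0}
      mul_mem' := by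
        intro X Y hX hY a ha b hb
        rw [Matrix.mul_apply]
        apply Finset.sum_eq_zero
        intro m _
        by_cases hm : m ∈ J
        · rw [hY m hm b hb, mul_zero]
        · rw [hX a ha m hm, zero_mul]
      add_mem' := by
        intro X Y hX hY a ha b hb
        rw [Matrix.add_apply, hX a ha b hb, hY a ha b hb, add_zero]
      algebraMap_mem' := by
        intro r a ha b hb
        rw [Matrix.algebraMap_eq_diagonal]
        exact diagonal_apply_ne _ (fun h => hb (h ▸ ha)) }
  have hle : Algebra.adjoin ℂ ({A, B} : Set (Mat d)) ≤ S := by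
    rw [Algebra.adjoin_le_iff]
    rintro X (rfl | rfl)
    · exact hAJ
    · exact hBJ
  have : (single j k 1 : Mat d) ∈ S := by
    rw [hsimple] at hle
    exact hle Algebra.mem_top
  have h1 := this j hj k hk
  rw [Matrix.single_apply_same] at h1
  exact one_ne_zero h1

/-- transfer adjoin=⊤ through conjugation -/
lemma adjoin_conj (U V A B : Mat d) (hUV : U * V = 1)
    (h : Algebra.adjoin ℂ ({A, B} : Set (Mat d)) = ⊤) :
    Algebra.adjoin ℂ ({U * A * V, U * B * V} : Set (Mat d)) = ⊤ := by
  have hVU : V * U = 1 := mul_eq_one_comm.mp hUV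
  rw [eq_top_iff]
  intro X _
  have hX : V * X * U ∈ Algebra.adjoin ℂ ({A, B} : Set (Mat d)) := h ▸ Algebra.mem_top
  have key : ∀ Y, Y ∈ Algebra.adjoin ℂ ({A, B} : Set (Mat d)) →
      U * Y * V ∈ Algebra.adjoin ℂ ({U * A * V, U * B * V} : Set (Mat d)) := by
    intro Y hY
    induction hY using Algebra.adjoin_induction with
    | mem x hx =>
        rcases hx with rfl | rfl
        · exact Algebra.subset_adjoin (Set.mem_insert _ _)
        · exact Algebra.subset_adjoin (Set.mem_insert_of_mem _ rfl)
    | algebraMap r =>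
        have : U * algebraMap ℂ (Mat d) r * V = algebraMap ℂ (Mat d) r := by
          rw [Algebra.algebraMap_eq_smul_one, mul_smul_comm, mul_one, smul_mul_assoc, hUV]
        rw [this]
        exact Subalgebra.algebraMap_mem _ r
    | add x y hx hy ihx ihy =>
        have : U * (x + y) * V = U * x * V + U * y * V := by noncomm_ring
        rw [this]
        exact Subalgebra.add_mem _ ihx ihy
    | mul x y hx hy ihx ihy =>
        have : U * (x * y) * V = (U * x * V) * (U * y * V) := by
          calc U * (x * y) * V = U * (x * ((V * U) * y)) * V := by rw [hVU, one_mul]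
          _ = (U * x * V) * (U * y * V) := by noncomm_ring
        rw [this]
        exact Subalgebra.mul_mem _ ihx ihy
  have := key _ hX
  have hXeq : U * (V * X * U) * V = X := by
    calc U * (V * X * U) * V = (U * V) * X * (U * V) := by noncomm_ring
    _ = X := by rw [hUV, one_mul, mul_one]
  rwa [hXeq] at this

/-- commuting with generators of a full algebra makes you scalar -/
lemma scalar_of_comm (A B X : Mat d)
    (hsimple : Algebra.adjoin ℂ ({A, B} : Set (Mat d)) = ⊤)
    (hXA : X * A = A * X) (hXB : X * B = B * X) :
    ∃ c : ℂ, X = c • (1 : Mat d) := by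
  have hcomm : ∀ Y : Mat d, Y * X = X * Y := by
    intro Y
    have hY : Y ∈ Algebra.adjoin ℂ ({A, B} : Set (Mat d)) := hsimple ▸ Algebra.mem_top
    induction hY using Algebra.adjoin_induction with
    | mem x hx => rcases hx with rfl | rfl
                  · exact hXA.symm
                  · exact hXB.symm
    | algebraMap r =>
        rw [Algebra.algebraMap_eq_smul_one, smul_mul_assoc, one_mul, mul_smul_comm, mul_one]
    | add x y hx hy ihx ihy => rw [add_mul, mul_add, ihx, ihy]
    | mul x y hx hy ihx ihy =>
        rw [mul_assoc, ihy, ← mul_assoc, ihx, mul_assoc]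
  have : X ∈ Set.range (Matrix.scalar (Fin d)) := by
    apply Matrix.mem_range_scalar_of_commute_single
    intro i j _
    exact hcomm _
  obtain ⟨c, hc⟩ := this
  refine ⟨c, ?_⟩
  rw [← hc]
  rw [Matrix.scalar_apply]
  rw [← Matrix.smul_one_eq_diagonal]

end Aux3

section Aux4
variable {d : ℕ}

lemma eProj_middle (m : Fin d) (X Y : Mat d) (a b : Fin d) :
    (X * eProj m * Y) a b = X a m * Y m b := by
  unfold eProj
  rw [Matrix.mul_apply]
  rw [Finset.sum_eq_single m]
  · rw [Matrix.mul_diagonal, if_pos rfl, mul_one]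
  · intro j _ hj
    rw [Matrix.mul_diagonal, if_neg hj, mul_zero, zero_mul]
  · intro h
    exact absurd (Finset.mem_univ m) h

lemma conj_eProj_idem (U V : Mat d) (hVU : V * U = 1) (i : Fin d) :
    (U * eProj i * V) * (U * eProj i * V) = U * eProj i * V := by
  calc (U * eProj i * V) * (U * eProj i * V)
      = U * (eProj i * ((V * U) * eProj i)) * V := by noncomm_ring
    _ = U * (eProj i * eProj i) * V := by rw [hVU, one_mul]
    _ = U * eProj i * V := by rw [eProj_mul_eProj]

lemma conj_eProj_ne_zero (U V : Mat d) (hVU : V * U = 1) (i : Fin d) :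
    U * eProj i * V ≠ 0 := by
  intro h
  have h2 : V * (U * eProj i * V) * U = eProj i := by
    calc V * (U * eProj i * V) * U = (V * U) * eProj i * (V * U) := by noncomm_ring
    _ = eProj i := by rw [hVU, one_mul, mul_one]
  rw [h, mul_zero, zero_mul] at h2
  exact eProj_ne_zero i h2.symm

lemma eigProj_hermitian (v : Fin d → ℂ) (hv : Function.Injective v)
    (hvmod : ∀ k, starRingEnd ℂ (v k) * v k = 1)
    (U V X : Mat d) (hUV : U * V = 1) (hVU : V * U = 1)
    (hX : X = U * diagonal v * V) (hXu : star X * X = 1) (i : Fin d) :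
    (eigProj v X i)ᴴ = eigProj v X i := by
  have hvc : Function.Injective (fun k => starRingEnd ℂ (v k)) := by
    intro a b h
    exact hv ((starRingEnd ℂ).injective h)
  have hdiagc : diagonal v * diagonal (fun k => starRingEnd ℂ (v k)) = 1 := by
    rw [diagonal_mul_diagonal]
    have : (fun k => v k * starRingEnd ℂ (v k)) = fun _ => (1 : ℂ) := by
      funext k
      rw [mul_comm]
      exact hvmod k
    rw [this, diagonal_one]
  have hXH : Xᴴ = U * diagonal (fun k => starRingEnd ℂ (v k)) * V := by
    have h2 : X * (U * diagonal (fun k => starRingEnd ℂ (v k)) * V) = 1 := by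
      rw [hX]
      calc (U * diagonal v * V) * (U * diagonal (fun k => starRingEnd ℂ (v k)) * V)
          = U * (diagonal v * ((V * U) * diagonal (fun k => starRingEnd ℂ (v k)))) * V := by
            noncomm_ring
        _ = U * (diagonal v * diagonal (fun k => starRingEnd ℂ (v k))) * V := by
            rw [hVU, one_mul]
        _ = U * V := by rw [hdiagc, mul_one]
        _ = 1 := hUV
    calc Xᴴ = Xᴴ * (X * (U * diagonal (fun k => starRingEnd ℂ (v k)) * V)) := by
          rw [h2, mul_one]
      _ = (Xᴴ * X) * (U * diagonal (fun k => starRingEnd ℂ (v k)) * V) := by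
          noncomm_ring
      _ = U * diagonal (fun k => starRingEnd ℂ (v k)) * V := by
          rw [← Matrix.star_eq_conjTranspose, hXu, one_mul]
  rw [star_eigProj, hXH, eigProj_of_conj_diagonal _ hvc U V hUV hVU i, hX,
    eigProj_of_conj_diagonal _ hv U V hUV hVU i]

lemma diagonal_mulVec_single' (v : Fin d → ℂ) (k : Fin d) :
    diagonal v *ᵥ Pi.single k 1 = v k • (Pi.single k 1 : Fin d → ℂ) := by
  funext a
  simp only [Matrix.mulVec, dotProduct, diagonal_apply, Pi.smul_apply, smul_eq_mul]
  rw [Finset.sum_eq_single k]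
  · by_cases h : a = k <;> simp [h, Pi.single_apply]
  · intro j _ hj
    rw [Pi.single_eq_of_ne hj, mul_zero]
  · intro h
    exact absurd (Finset.mem_univ k) h

lemma star_dot_self_ne_zero (w : Fin d → ℂ) (hw : w ≠ 0) : star w ⬝ᵥ w ≠ 0 := by
  have hdot : star w ⬝ᵥ w = ((∑ i, Complex.normSq (w i) : ℝ) : ℂ) := by
    unfold dotProduct
    push_cast
    refine Finset.sum_congr rfl fun i _ => ?_
    have : (star w) i = starRingEnd ℂ (w i) := rfl
    rw [this, mul_comm, Complex.mul_conj]
  rw [hdot]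
  intro h
  rw [Complex.ofReal_eq_zero] at h
  have h1 := (Finset.sum_eq_zero_iff_of_nonneg
    (fun i _ => Complex.normSq_nonneg (w i))).mp h
  apply hw
  funext a
  exact Complex.normSq_eq_zero.mp (h1 a (Finset.mem_univ a))

lemma unit_modulus (W Winv : Mat d) (hWW : W * Winv = 1) (hWinvW : Winv * W = 1)
    (v : Fin d → ℂ) (X : Mat d) (hX : X = W * diagonal v * Winv)
    (hXu : star X * X = 1) (k : Fin d) :
    starRingEnd ℂ (v k) * v k = 1 := by
  set w : Fin d → ℂ := W *ᵥ Pi.single k 1 with hw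
  have hwne : w ≠ 0 := by
    intro h
    have h2 : Winv *ᵥ w = Pi.single k 1 := by
      rw [hw, Matrix.mulVec_mulVec, hWinvW, Matrix.one_mulVec]
    rw [h, Matrix.mulVec_zero] at h2
    have := congrFun h2 k
    simp [Pi.single_apply] at this
  have heig : X *ᵥ w = v k • w := by
    rw [hw, Matrix.mulVec_mulVec]
    have hXW : X * W = W * diagonal v := by
      rw [hX]
      calc W * diagonal v * Winv * W = W * diagonal v * (Winv * W) := by rw [mul_assoc]
      _ = W * diagonal v := by rw [hWinvW, mul_one]
    rw [hXW, ← Matrix.mulVec_mulVec, diagonal_mulVec_single', Matrix.mulVec_smul]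
  have h1 : star (X *ᵥ w) ⬝ᵥ (X *ᵥ w) = star w ⬝ᵥ w := by
    rw [Matrix.star_mulVec, ← Matrix.dotProduct_mulVec, Matrix.mulVec_mulVec,
      ← Matrix.star_eq_conjTranspose, hXu, Matrix.one_mulVec]
  rw [heig] at h1
  have h2 : star (v k • w) ⬝ᵥ (v k • w) = (starRingEnd ℂ (v k) * v k) * (star w ⬝ᵥ w) := by
    rw [star_smul, smul_dotProduct, dotProduct_smul]
    simp only [smul_eq_mul]
    have hsvk : star (v k) = starRingEnd ℂ (v k) := rfl
    rw [hsvk]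
    ring
  rw [h2] at h1
  have h3 : (starRingEnd ℂ (v k) * v k - 1) * (star w ⬝ᵥ w) = 0 := by
    linear_combination h1
  have h4 : star w ⬝ᵥ w ≠ 0 := star_dot_self_ne_zero w hwne
  have := (mul_eq_zero.mp h3).resolve_right h4
  exact sub_eq_zero.mp this

noncomputable def tnorm (Y : Mat d) : ℝ := ∑ i, ∑ j, Complex.normSq (Y i j)

lemma tnorm_nonneg (Y : Mat d) : 0 ≤ tnorm Y :=
  Finset.sum_nonneg fun i _ => Finset.sum_nonneg fun j _ => Complex.normSq_nonneg _

lemma tnorm_eq_zero (Y : Mat d) (h : tnorm Y = 0) : Y = 0 := by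
  have h1 := (Finset.sum_eq_zero_iff_of_nonneg
    (fun i _ => Finset.sum_nonneg fun j _ => Complex.normSq_nonneg (Y i j))).mp h
  ext a b
  have h2 := (Finset.sum_eq_zero_iff_of_nonneg
    (fun j _ => Complex.normSq_nonneg (Y a j))).mp (h1 a (Finset.mem_univ a))
  have h3 := h2 b (Finset.mem_univ b)
  rw [Matrix.zero_apply]
  exact Complex.normSq_eq_zero.mp h3

lemma trace_star_mul (Y : Mat d) : Matrix.trace (Yᴴ * Y) = (tnorm Y : ℂ) := by
  unfold tnorm Matrix.trace
  push_cast
  rw [Finset.sum_comm]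
  refine Finset.sum_congr rfl fun j _ => ?_
  rw [Matrix.diag, Matrix.mul_apply]
  refine Finset.sum_congr rfl fun i _ => ?_
  rw [Matrix.conjTranspose_apply]
  have : star (Y i j) = starRingEnd ℂ (Y i j) := rfl
  rw [this, mul_comm, Complex.mul_conj]

end Aux4

/-- if a simple representation of dimension `1 ≤ d ≤ 5` with distinct
eigenvalues is unitarizable, then every `μ_{1i}` (`2 ≤ i ≤ d`) is a strictly positive real. -/
theorem mu_pos_of_unitarizable {d : ℕ} (hd : 1 ≤ d) (hd5 : d ≤ 5)
    (A B : Matrix (Fin d) (Fin d) ℂ)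
    (hA : IsUnit A) (hB : IsUnit B)
    (hbraid : A * B * A = B * A * B)
    (hsimple : Algebra.adjoin ℂ ({A, B} : Set (Matrix (Fin d) (Fin d) ℂ)) = ⊤)
    (lam : Fin d → ℂ) (hinj : Function.Injective lam)
    (P : Matrix (Fin d) (Fin d) ℂ) (hP : IsUnit P)
    (hdiag : A = P * Matrix.diagonal lam * P⁻¹)
    (μ : Fin d → Fin d → ℂ)
    (hμ : ∀ i j, eigProj lam B i * eigProj lam A j * eigProj lam B i
        = μ i j • eigProj lam B i)
    (hunit : ∃ M : Matrix (Fin d) (Fin d) ℂ, IsUnit M ∧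
      M * A * M⁻¹ ∈ Matrix.unitaryGroup (Fin d) ℂ ∧
      M * B * M⁻¹ ∈ Matrix.unitaryGroup (Fin d) ℂ) :
    ∀ i, i ≠ (⟨0, hd⟩ : Fin d) → ∃ r : ℝ, 0 < r ∧ μ ⟨0, hd⟩ i = (r : ℂ) := by

  classical
  intro m hm
  set z : Fin d := ⟨0, hd⟩ with hzdef
  obtain ⟨M, hM, hAu, hBu⟩ := hunit
  have hPdet : IsUnit P.det := (Matrix.isUnit_iff_isUnit_det P).mp hP
  have hPP : P * P⁻¹ = 1 := Matrix.mul_nonsing_inv P hPdet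
  have hPP' : P⁻¹ * P = 1 := Matrix.nonsing_inv_mul P hPdet
  have hMdet : IsUnit M.det := (Matrix.isUnit_iff_isUnit_det M).mp hM
  have hMM : M * M⁻¹ = 1 := Matrix.mul_nonsing_inv M hMdet
  have hMM' : M⁻¹ * M = 1 := Matrix.nonsing_inv_mul M hMdet
  set D : Mat d := diagonal lam with hDdef
  obtain ⟨Bb, hBbdef⟩ : ∃ Bb : Mat d, Bb = P⁻¹ * B * P := ⟨_, rfl⟩
  have hAD : P⁻¹ * A * P = D := by
    rw [hdiag]
    calc P⁻¹ * (P * D * P⁻¹) * P = (P⁻¹ * P) * D * (P⁻¹ * P) := by noncomm_ring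
    _ = D := by rw [hPP', one_mul, mul_one]
  -- eigenvalues are nonzero
  have hAdet : IsUnit A.det := (Matrix.isUnit_iff_isUnit_det A).mp hA
  have hlamprod : (∏ k, lam k) ≠ 0 := by
    intro h
    have hdet : A.det = P.det * ((∏ k, lam k) * P⁻¹.det) := by
      rw [hdiag, Matrix.det_mul, Matrix.det_mul, hDdef, Matrix.det_diagonal, mul_assoc]
    rw [h, zero_mul, mul_zero] at hdet
    rw [hdet] at hAdet
    exact not_isUnit_zero hAdet
  have hlam : ∀ k, lam k ≠ 0 := fun k h =>
    hlamprod (Finset.prod_eq_zero (Finset.mem_univ k) h)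
  -- transfer to the P-frame
  set φ := conjAlgHom P⁻¹ P hPP' with hφdef
  have hφA : φ A = D := by rw [hφdef, conjAlgHom_apply]; exact hAD
  have hφB : φ B = Bb := by rw [hφdef, conjAlgHom_apply, hBbdef]
  have hbraidP : D * Bb * D = Bb * D * Bb := by
    have h := congrArg φ hbraid
    rw [_root_.map_mul, _root_.map_mul, _root_.map_mul, _root_.map_mul, hφA, hφB] at h
    exact h
  obtain ⟨Δ, hΔdef⟩ : ∃ Δ : Mat d, Δ = D * Bb * D := ⟨_, rfl⟩
  have hΔBb : Δ * Bb = D * Δ := by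
    calc Δ * Bb = D * (Bb * D * Bb) := by rw [hΔdef]; noncomm_ring
    _ = D * (D * Bb * D) := by rw [hbraidP]
    _ = D * Δ := by rw [hΔdef]
  have hBbΔ : Bb * Δ = Δ * D := by
    calc Bb * Δ = (Bb * D * Bb) * D := by rw [hΔdef]; noncomm_ring
    _ = (D * Bb * D) * D := by rw [hbraidP]
    _ = Δ * D := by rw [hΔdef]
  have hcomm1 : (Δ * Δ) * D = D * (Δ * Δ) := by
    calc (Δ * Δ) * D = Δ * (Δ * D) := mul_assoc Δ Δ D
    _ = Δ * (Bb * Δ) := by rw [hBbΔ]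
    _ = (Δ * Bb) * Δ := (mul_assoc Δ Bb Δ).symm
    _ = (D * Δ) * Δ := by rw [hΔBb]
    _ = D * (Δ * Δ) := mul_assoc D Δ Δ
  have hcomm2 : (Δ * Δ) * Bb = Bb * (Δ * Δ) := by
    calc (Δ * Δ) * Bb = Δ * (Δ * Bb) := mul_assoc Δ Δ Bb
    _ = Δ * (D * Δ) := by rw [hΔBb]
    _ = (Δ * D) * Δ := (mul_assoc Δ D Δ).symm
    _ = (Bb * Δ) * Δ := by rw [hBbΔ]
    _ = Bb * (Δ * Δ) := mul_assoc Bb Δ Δ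
  have hsimpleP : Algebra.adjoin ℂ ({D, Bb} : Set (Mat d)) = ⊤ := by
    have h := adjoin_conj P⁻¹ P A B hPP' hsimple
    rw [hAD, ← hBbdef] at h
    exact h
  obtain ⟨c, hcΔ⟩ := scalar_of_comm D Bb (Δ * Δ) hsimpleP hcomm1 hcomm2
  -- units
  have hPinvdet : IsUnit P⁻¹.det := by
    apply IsUnit.of_mul_eq_one P.det
    rw [← Matrix.det_mul, hPP', Matrix.det_one]
  have hBbdet : IsUnit Bb.det := by
    rw [hBbdef, Matrix.det_mul, Matrix.det_mul]
    exact (hPinvdet.mul ((Matrix.isUnit_iff_isUnit_det B).mp hB)).mul hPdet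
  have hDdet : IsUnit D.det := by
    have : D = P⁻¹ * A * P := hAD.symm
    rw [this, Matrix.det_mul, Matrix.det_mul]
    exact (hPinvdet.mul hAdet).mul hPdet
  have hΔdet : IsUnit Δ.det := by
    rw [hΔdef, Matrix.det_mul, Matrix.det_mul]
    exact (hDdet.mul hBbdet).mul hDdet
  have hc : c ≠ 0 := by
    intro h
    have h1 : IsUnit ((Δ * Δ).det) := by
      rw [Matrix.det_mul]
      exact hΔdet.mul hΔdet
    rw [hcΔ, Matrix.det_smul, Matrix.det_one, mul_one, Fintype.card_fin, h,
      zero_pow (by omega : d ≠ 0)] at h1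
    exact not_isUnit_zero h1
  obtain ⟨Δinv, hΔinvdef⟩ : ∃ X : Mat d, X = c⁻¹ • Δ := ⟨_, rfl⟩
  have hΔΔinv : Δ * Δinv = 1 := by
    rw [hΔinvdef, mul_smul_comm, hcΔ, smul_smul, inv_mul_cancel₀ hc, one_smul]
  have hΔinvΔ : Δinv * Δ = 1 := by
    rw [hΔinvdef, smul_mul_assoc, hcΔ, smul_smul, inv_mul_cancel₀ hc, one_smul]
  obtain ⟨Dinv, hDinvdef⟩ : ∃ X : Mat d, X = diagonal (fun k => (lam k)⁻¹) := ⟨_, rfl⟩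
  have hDinvD : Dinv * D = 1 := by
    rw [hDinvdef, hDdef, diagonal_mul_diagonal]
    have : (fun k => (lam k)⁻¹ * lam k) = fun _ => (1 : ℂ) :=
      funext fun k => inv_mul_cancel₀ (hlam k)
    rw [this, diagonal_one]
  -- key identities
  have hI1 : Δ * D * Δ = c • Bb := by
    calc Δ * D * Δ = Δ * (D * Δ) := mul_assoc Δ D Δ
    _ = Δ * (Δ * Bb) := by rw [← hΔBb]
    _ = (Δ * Δ) * Bb := (mul_assoc Δ Δ Bb).symm
    _ = (c • 1) * Bb := by rw [hcΔ]
    _ = c • Bb := by rw [smul_mul_assoc, one_mul]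
  have hDinvΔ : Dinv * Δ = Bb * D := by
    calc Dinv * Δ = (Dinv * D) * (Bb * D) := by rw [hΔdef]; noncomm_ring
    _ = Bb * D := by rw [hDinvD, one_mul]
  have hI2 : Δ * Dinv * Δ = D * Δ * D := by
    calc Δ * Dinv * Δ = Δ * (Dinv * Δ) := mul_assoc Δ Dinv Δ
    _ = Δ * (Bb * D) := by rw [hDinvΔ]
    _ = (Δ * Bb) * D := (mul_assoc Δ Bb D).symm
    _ = (D * Δ) * D := by rw [hΔBb]
  -- entries
  have hΔBbentry : ∀ i j, Δ i j = lam i * Bb i j * lam j := by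
    intro i j
    conv_lhs => rw [hΔdef, hDdef]
    rw [Matrix.mul_diagonal, Matrix.diagonal_mul]
  have hBbzero : ∀ i j, Δ i j = 0 → Bb i j = 0 := by
    intro i j h
    have h2 := hΔBbentry i j
    rw [h] at h2
    rcases mul_eq_zero.mp h2.symm with h3 | h3
    · rcases mul_eq_zero.mp h3 with h4 | h4
      · exact absurd h4 (hlam i)
      · exact h4
    · exact absurd h3 (hlam j)
  -- the length-2 path shortcut
  have key2 : ∀ i k : Fin d, i ≠ k → Δ i k = 0 →
      ∀ j, j ≠ i → j ≠ k → Δ i j * Δ j k = 0 := by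
    intro i k hik h0 j hji hjk
    have hkmem : k ∈ Finset.univ.erase i :=
      Finset.mem_erase.mpr ⟨Ne.symm hik, Finset.mem_univ k⟩
    set s : Finset (Fin d) := (Finset.univ.erase i).erase k with hsdef
    have hscard : s.card ≤ 3 := by
      rw [hsdef, Finset.card_erase_of_mem hkmem, Finset.card_erase_of_mem (Finset.mem_univ i),
        Finset.card_univ, Fintype.card_fin]
      omega
    have hBbik : Bb i k = 0 := hBbzero i k h0
    have hfull0 : ∑ x, Δ i x * Δ x k = 0 := by
      have h := congrFun (congrFun hcΔ i) k
      rw [Matrix.mul_apply, Matrix.smul_apply, Matrix.one_apply_ne hik, smul_zero] at h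
      exact h
    have hfull1 : ∑ x, lam x * (Δ i x * Δ x k) = 0 := by
      have h := congrFun (congrFun hI1 i) k
      rw [hDdef] at h
      rw [Matrix.mul_apply] at h
      simp only [Matrix.mul_diagonal] at h
      rw [Matrix.smul_apply, hBbik, smul_zero] at h
      rw [← h]
      exact Finset.sum_congr rfl fun x _ => by ring
    have hfull2 : ∑ x, (lam x)⁻¹ * (Δ i x * Δ x k) = 0 := by
      have h := congrFun (congrFun hI2 i) k
      rw [hDinvdef, hDdef] at h
      rw [Matrix.mul_apply] at h
      simp only [Matrix.mul_diagonal, Matrix.diagonal_mul] at h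
      rw [h0, mul_zero, zero_mul] at h
      rw [← h]
      exact Finset.sum_congr rfl fun x _ => by ring
    have hrestr : ∀ f : Fin d → ℂ, f i = 0 → f k = 0 → (∑ x, f x) = 0 →
        ∑ x ∈ s, f x = 0 := by
      intro f hfi hfk hsum
      have h1 : ∑ x ∈ Finset.univ.erase i, f x = 0 := by
        have h2 := Finset.sum_erase_add Finset.univ f (Finset.mem_univ i)
        rw [hfi, add_zero] at h2
        rw [h2]
        exact hsum
      have h2 := Finset.sum_erase_add (Finset.univ.erase i) f hkmem
      rw [hfk, add_zero] at h2
      rw [hsdef, h2]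
      exact h1
    have e0 := hrestr (fun x => Δ i x * Δ x k)
      (by show Δ i i * Δ i k = 0; rw [h0, mul_zero])
      (by show Δ i k * Δ k k = 0; rw [h0, zero_mul]) hfull0
    have e1 := hrestr (fun x => lam x * (Δ i x * Δ x k))
      (by show lam i * (Δ i i * Δ i k) = 0; rw [h0, mul_zero, mul_zero])
      (by show lam k * (Δ i k * Δ k k) = 0; rw [h0, zero_mul, mul_zero]) hfull1
    have e2 := hrestr (fun x => (lam x)⁻¹ * (Δ i x * Δ x k))
      (by show (lam i)⁻¹ * (Δ i i * Δ i k) = 0; rw [h0, mul_zero, mul_zero])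
      (by show (lam k)⁻¹ * (Δ i k * Δ k k) = 0; rw [h0, zero_mul, mul_zero]) hfull2
    exact elim3 s hscard lam (fun x => Δ i x * Δ x k) hinj hlam e0 e1 e2 j
      (by rw [hsdef]; exact Finset.mem_erase.mpr ⟨hjk, Finset.mem_erase.mpr ⟨hji, Finset.mem_univ j⟩⟩)
  -- all off-diagonal entries of Δ are nonzero
  have nonvanish : ∀ i j : Fin d, i ≠ j → Δ i j ≠ 0 := by
    intro i j0 hij h0
    set J : Set (Fin d) := {j | j = i ∨ Δ i j ≠ 0} with hJdef
    have hj0 : j0 ∉ J := by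
      intro h
      rcases h with h | h
      · exact hij h.symm
      · exact h h0
    have hDJ : ∀ a ∈ J, ∀ b ∉ J, D a b = 0 := by
      intro a ha b hb
      have hab : a ≠ b := fun h => hb (h ▸ ha)
      rw [hDdef]
      exact diagonal_apply_ne lam hab
    have hΔJ : ∀ a ∈ J, ∀ b ∉ J, Δ a b = 0 := by
      intro a ha b hb
      have hbne : b ≠ i := fun h => hb (Or.inl h)
      have hΔib : Δ i b = 0 := by
        by_contra h
        exact hb (Or.inr h)
      by_cases hai : a = i
      · rw [hai]; exact hΔib
      · have ha2 : Δ i a ≠ 0 := ha.resolve_left hai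
        have hab2 : a ≠ b := fun h => (h ▸ ha2 : Δ i b ≠ 0) hΔib
        exact (mul_eq_zero.mp (key2 i b (Ne.symm hbne) hΔib a hai hab2)).resolve_left ha2
    have hBbJ : ∀ a ∈ J, ∀ b ∉ J, Bb a b = 0 := fun a ha b hb => hBbzero a b (hΔJ a ha b hb)
    exact block_obstruction D Bb hsimpleP J hDJ hBbJ i (Or.inl rfl) j0 hj0
  -- conjugated form of Bb
  have hBbconj : Bb = Δ * D * Δinv := by
    calc Bb = Bb * (Δ * Δinv) := by rw [hΔΔinv, mul_one]
    _ = (Bb * Δ) * Δinv := (mul_assoc Bb Δ Δinv).symm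
    _ = (Δ * D) * Δinv := by rw [hBbΔ]
  -- compute μ z m in the P-frame
  have hμP : eigProj lam Bb z * eigProj lam D m * eigProj lam Bb z
      = μ z m • eigProj lam Bb z := by
    have h := congrArg φ (hμ z m)
    rw [_root_.map_mul, _root_.map_mul, _root_.map_smul] at h
    have hB' : φ (eigProj lam B z) = eigProj lam Bb z := by
      rw [hφdef, conjAlgHom_apply, ← eigProj_conj lam P⁻¹ P B hPP' z, ← hBbdef]
    have hA' : φ (eigProj lam A m) = eigProj lam D m := by
      rw [hφdef, conjAlgHom_apply, ← eigProj_conj lam P⁻¹ P A hPP' m, hAD]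
    rw [hB', hA'] at h
    exact h
  have heigD : eigProj lam D m = eProj m := by
    rw [hDdef]; exact eigProj_diagonal lam hinj m
  have heigBb : eigProj lam Bb z = Δ * eProj z * Δinv := by
    rw [hBbconj, hDdef]
    exact eigProj_of_conj_diagonal lam hinj Δ Δinv hΔΔinv hΔinvΔ z
  rw [heigD, heigBb] at hμP
  have hcomp : (Δ * eProj z * Δinv) * eProj m * (Δ * eProj z * Δinv)
      = ((Δinv * eProj m * Δ) z z) • (Δ * eProj z * Δinv) := by
    calc (Δ * eProj z * Δinv) * eProj m * (Δ * eProj z * Δinv)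
        = Δ * (eProj z * (Δinv * eProj m * Δ) * eProj z) * Δinv := by noncomm_ring
      _ = Δ * (((Δinv * eProj m * Δ) z z) • eProj z) * Δinv := by rw [eProj_sandwich]
      _ = ((Δinv * eProj m * Δ) z z) • (Δ * eProj z * Δinv) := by
          rw [mul_smul_comm ((Δinv * eProj m * Δ) z z) Δ (eProj z),
            smul_mul_assoc ((Δinv * eProj m * Δ) z z) (Δ * eProj z) Δinv]
  rw [hcomp] at hμP
  have hν : (Δinv * eProj m * Δ) z z = c⁻¹ * Δ z m * Δ m z := by
    rw [eProj_middle, hΔinvdef, Matrix.smul_apply, smul_eq_mul, mul_assoc]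
  have hE'ne : Δ * eProj z * Δinv ≠ 0 := conj_eProj_ne_zero Δ Δinv hΔinvΔ z
  have hμval : μ z m = c⁻¹ * Δ z m * Δ m z := by
    have hsub : (μ z m - (Δinv * eProj m * Δ) z z) • (Δ * eProj z * Δinv) = 0 := by
      rw [sub_smul, hμP.symm, sub_self]
    rcases smul_eq_zero.mp hsub with h | h
    · rw [sub_eq_zero] at h
      rw [h, hν]
    · exact absurd h hE'ne
  have hμne : μ z m ≠ 0 := by
    rw [hμval]
    exact mul_ne_zero (mul_ne_zero (inv_ne_zero hc) (nonvanish z m (Ne.symm hm)))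
      (nonvanish m z hm)
  -- unitary frame
  obtain ⟨N, hNdef⟩ : ∃ X : Mat d, X = M * P := ⟨_, rfl⟩
  obtain ⟨Ninv, hNinvdef⟩ : ∃ X : Mat d, X = P⁻¹ * M⁻¹ := ⟨_, rfl⟩
  have hNN : N * Ninv = 1 := by
    rw [hNdef, hNinvdef]
    calc M * P * (P⁻¹ * M⁻¹) = M * (P * P⁻¹) * M⁻¹ := by noncomm_ring
    _ = 1 := by rw [hPP, mul_one, hMM]
  have hNinvN : Ninv * N = 1 := by
    rw [hNdef, hNinvdef]
    calc P⁻¹ * M⁻¹ * (M * P) = P⁻¹ * (M⁻¹ * M) * P := by noncomm_ring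
    _ = 1 := by rw [hMM', mul_one, hPP']
  obtain ⟨A₁, hA1def⟩ : ∃ X : Mat d, X = M * A * M⁻¹ := ⟨_, rfl⟩
  obtain ⟨B₁, hB1def⟩ : ∃ X : Mat d, X = M * B * M⁻¹ := ⟨_, rfl⟩
  have hA1 : A₁ = N * diagonal lam * Ninv := by
    rw [hA1def, hdiag, hNdef, hNinvdef, ← hDdef]
    noncomm_ring
  have hBP : B = P * Bb * P⁻¹ := by
    rw [hBbdef]
    calc B = (P * P⁻¹) * B * (P * P⁻¹) := by rw [hPP, one_mul, mul_one]
    _ = P * (P⁻¹ * B * P) * P⁻¹ := by noncomm_ring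
  have hB1 : B₁ = (N * Δ) * diagonal lam * (Δinv * Ninv) := by
    rw [hB1def, hBP, hBbconj, hNdef, hNinvdef, ← hDdef]
    noncomm_ring
  have hU1V1 : (N * Δ) * (Δinv * Ninv) = 1 := by
    calc (N * Δ) * (Δinv * Ninv) = N * (Δ * Δinv) * Ninv := by noncomm_ring
    _ = 1 := by rw [hΔΔinv, mul_one, hNN]
  have hV1U1 : (Δinv * Ninv) * (N * Δ) = 1 := by
    calc (Δinv * Ninv) * (N * Δ) = Δinv * (Ninv * N) * Δ := by noncomm_ring
    _ = 1 := by rw [hNinvN, mul_one, hΔinvΔ]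
  have hA1star : star A₁ * A₁ = 1 := by rw [hA1def]; exact Matrix.mem_unitaryGroup_iff'.mp hAu
  have hB1star : star B₁ * B₁ = 1 := by rw [hB1def]; exact Matrix.mem_unitaryGroup_iff'.mp hBu
  have hmod : ∀ k, starRingEnd ℂ (lam k) * lam k = 1 := fun k =>
    unit_modulus N Ninv hNN hNinvN lam A₁ hA1 hA1star k
  have hPherm : (eigProj lam B₁ z)ᴴ = eigProj lam B₁ z :=
    eigProj_hermitian lam hinj hmod (N * Δ) (Δinv * Ninv) B₁ hU1V1 hV1U1 hB1 hB1star z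
  have hQherm : (eigProj lam A₁ m)ᴴ = eigProj lam A₁ m :=
    eigProj_hermitian lam hinj hmod N Ninv A₁ hNN hNinvN hA1 hA1star m
  have hPeq : eigProj lam B₁ z = (N * Δ) * eProj z * (Δinv * Ninv) := by
    rw [hB1]
    exact eigProj_of_conj_diagonal lam hinj _ _ hU1V1 hV1U1 z
  have hQeq : eigProj lam A₁ m = N * eProj m * Ninv := by
    rw [hA1]
    exact eigProj_of_conj_diagonal lam hinj _ _ hNN hNinvN m
  have hPne : eigProj lam B₁ z ≠ 0 := by
    rw [hPeq]; exact conj_eProj_ne_zero _ _ hV1U1 z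
  have hPidem : eigProj lam B₁ z * eigProj lam B₁ z = eigProj lam B₁ z := by
    rw [hPeq]; exact conj_eProj_idem _ _ hV1U1 z
  have hQidem : eigProj lam A₁ m * eigProj lam A₁ m = eigProj lam A₁ m := by
    rw [hQeq]; exact conj_eProj_idem _ _ hNinvN m
  set ψ := conjAlgHom M M⁻¹ hMM with hψdef
  have hμM : eigProj lam B₁ z * eigProj lam A₁ m * eigProj lam B₁ z
      = μ z m • eigProj lam B₁ z := by
    have h := congrArg ψ (hμ z m)
    rw [_root_.map_mul, _root_.map_mul, _root_.map_smul] at h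
    have hB' : ψ (eigProj lam B z) = eigProj lam B₁ z := by
      rw [hψdef, conjAlgHom_apply, ← eigProj_conj lam M M⁻¹ B hMM z, ← hB1def]
    have hA' : ψ (eigProj lam A m) = eigProj lam A₁ m := by
      rw [hψdef, conjAlgHom_apply, ← eigProj_conj lam M M⁻¹ A hMM m, ← hA1def]
    rw [hB', hA'] at h
    exact h
  set Pm : Mat d := eigProj lam B₁ z with hPmdef
  set Qm : Mat d := eigProj lam A₁ m with hQmdef
  set Xm : Mat d := Qm * Pm with hXmdef
  have hXX : Xmᴴ * Xm = μ z m • Pm := by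
    rw [hXmdef, conjTranspose_mul, hPherm, hQherm]
    calc Pm * Qm * (Qm * Pm) = Pm * (Qm * Qm) * Pm := by noncomm_ring
    _ = Pm * Qm * Pm := by rw [hQidem]
    _ = μ z m • Pm := hμM
  have htrP : Matrix.trace Pm = (tnorm Pm : ℂ) := by
    calc Matrix.trace Pm = Matrix.trace (Pmᴴ * Pm) := by rw [hPherm, hPidem]
    _ = (tnorm Pm : ℂ) := trace_star_mul Pm
  have key : μ z m * (tnorm Pm : ℂ) = (tnorm Xm : ℂ) := by
    calc μ z m * (tnorm Pm : ℂ) = μ z m * Matrix.trace Pm := by rw [htrP]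
    _ = Matrix.trace (μ z m • Pm) := by rw [Matrix.trace_smul, smul_eq_mul]
    _ = Matrix.trace (Xmᴴ * Xm) := by rw [hXX]
    _ = (tnorm Xm : ℂ) := trace_star_mul Xm
  have htnP : tnorm Pm ≠ 0 := fun h => hPne (tnorm_eq_zero Pm h)
  have hμr : μ z m = ((tnorm Xm / tnorm Pm : ℝ) : ℂ) := by
    rw [Complex.ofReal_div]
    rw [eq_div_iff (by exact_mod_cast htnP : ((tnorm Pm : ℝ) : ℂ) ≠ 0)]
    exact key
  refine ⟨tnorm Xm / tnorm Pm, ?_, hμr⟩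
  have hge : 0 ≤ tnorm Xm / tnorm Pm := div_nonneg (tnorm_nonneg _) (tnorm_nonneg _)
  rcases hge.lt_or_eq with h | h
  · exact h
  · exfalso
    apply hμne
    rw [hμr, ← h, Complex.ofReal_zero]
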